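/- arXiv:2305.15594 — 3 statements merged into one kernel-verified Lean document; each statement's English description precedes it below -/
import Mathlib

section
/- Adaptive composition of Rényi differential privacy: Fix α > 1 and an adjacency relation on datasets. Let M₁ be a mechanism with output space Ω₁ satisfying (α, ε₁)-Rényi differential privacy, and let M₂ be a Markov kernel assigning to each pair (D, o₁) of a dataset and an outcome o₁ ∈ Ω₁ a probability measure M₂(D, o₁) on Ω₂, such that for every fixed o₁ ∈ Ω₁ the mechanism D ↦ M₂(D, o₁) satisfies (α, ε₂)-Rényi differential privacy. Then the composed mechanism M(D) = the joint law of (o₁, o₂) with o₁ ∼ M₁(D) and o₂ ∼ M₂(D, o₁) satisfies (α, ε₁ + ε₂)-Rényi differential privacy. -/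
open MeasureTheory ProbabilityTheory
open scoped NNReal ENNReal Classical

/-- Clipping operator: `clip_c(v) = v / max(1, ‖v‖₂/c)`. -/
noncomputable def clip {d : ℕ} (c : ℝ) (v : EuclideanSpace ℝ (Fin d)) :
    EuclideanSpace ℝ (Fin d) :=
  (max 1 (‖v‖ / c))⁻¹ • v

/-- Add–remove adjacency: one dataset is obtained from the other by inserting one record. -/
def AddRemoveAdjacent {X : Type*} (D D' : List X) : Prop :=
  (∃ x l r, D = l ++ r ∧ D' = l ++ x :: r) ∨ (∃ x l r, D' = l ++ r ∧ D = l ++ x :: r)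

/-- `(ε, δ)`-differential privacy of a mechanism `M` w.r.t. an adjacency relation. -/
def DP {X Ω : Type*} [MeasurableSpace Ω] (M : List X → Measure Ω)
    (adj : List X → List X → Prop) (ε δ : ℝ) : Prop :=
  ∀ D D', adj D D' → ∀ S : Set Ω, MeasurableSet S →
    M D S ≤ ENNReal.ofReal (Real.exp ε) * M D' S + ENNReal.ofReal δ

/-- The isotropic Gaussian `N(μ, v I_d)` on `ℝ^d` (coordinates independent, each of variance `v`). -/
noncomputable def gaussianPi {d : ℕ} (μ : EuclideanSpace ℝ (Fin d)) (v : ℝ≥0) :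
    Measure (EuclideanSpace ℝ (Fin d)) :=
  (Measure.pi fun i : Fin d => gaussianReal (μ i) v).map
    (MeasurableEquiv.toLp 2 (Fin d → ℝ))

/-- Rényi divergence of order `α`. -/
noncomputable def renyiDiv {Ω : Type*} [MeasurableSpace Ω] (α : ℝ) (P Q : Measure Ω) : EReal :=
  if P ≪ Q then (((α - 1)⁻¹ : ℝ) : EReal) * ENNReal.log (∫⁻ x, P.rnDeriv Q x ^ α ∂Q)
  else ⊤

/-!
Write `H(P, Q) = ∫ (dP/dQ)^α dQ`, so that `renyiDiv α P Q ≤ ε` says `P ≪ Q` and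
`H(P, Q) ≤ (e^ε)^(α-1)`; it suffices to show `H(μ ⊗ κ, ν ⊗ η) ≤ H(μ, ν) · sup_x H(κ x, η x)`.
With `h` the density of `μ ⊗ κ` against `ν ⊗ η` and `T = ∫ h^α d(ν ⊗ η) = ∫ h^(α-1) d(μ ⊗ κ)`,
Hölder's inequality against the density, first in each fibre `κ x` and then against `μ`, gives
`T ≤ (H(μ, ν) · sup_x H(κ x, η x))^(1/α) · T^(1 - 1/α)`, which can be solved for `T` when `T`
is finite. Truncating `h` at level `n` makes `T` finite, and monotone convergence concludes.
This route never factors `h` as `dμ/dν (x) · d(κ x)/d(η x) (y)`, which would need a jointly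
measurable fibrewise density and hence countably generated σ-algebras.
-/

lemma renyiDiv_le_iff {Ω : Type*} [MeasurableSpace Ω] {α : ℝ} (hα : 1 < α) {P Q : Measure Ω}
    (ε : ℝ) :
    renyiDiv α P Q ≤ ε ↔
      P ≪ Q ∧ ∫⁻ x, P.rnDeriv Q x ^ α ∂Q ≤ ENNReal.ofReal (Real.exp ε) ^ (α - 1) := by
  by_cases hPQ : P ≪ Q
  · have hε : (ε : EReal) = ENNReal.log (ENNReal.ofReal (Real.exp ε)) := by
      rw [ENNReal.log_ofReal_of_pos (Real.exp_pos ε), Real.log_exp]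
    rw [renyiDiv, if_pos hPQ, ← ENNReal.log_rpow, hε, ENNReal.log_le_log_iff,
      ENNReal.rpow_inv_le_iff (sub_pos.2 hα)]
    exact (and_iff_right hPQ).symm
  · simp [renyiDiv, hPQ]

lemma lintegral_le_lintegral_rnDeriv_rpow_mul {Ω : Type*} [MeasurableSpace Ω] {P Q : Measure Ω}
    [P.HaveLebesgueDecomposition Q] (hPQ : P ≪ Q) {p q : ℝ} (hpq : p.HolderConjugate q)
    {φ : Ω → ℝ≥0∞} (hφ : AEMeasurable φ Q) :
    ∫⁻ x, φ x ∂P ≤ (∫⁻ x, P.rnDeriv Q x ^ p ∂Q) ^ (1 / p) * (∫⁻ x, φ x ^ q ∂Q) ^ (1 / q) := by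
  rw [← lintegral_rnDeriv_mul hPQ hφ]
  exact ENNReal.lintegral_mul_le_Lp_mul_Lq Q hpq (P.measurable_rnDeriv Q).aemeasurable hφ

lemma ENNReal.le_of_le_rpow_mul_self_rpow {T C : ℝ≥0∞} {p q : ℝ} (hpq : p.HolderConjugate q)
    (hT : T ≠ ⊤) (h : T ≤ C ^ (1 / p) * T ^ (1 / q)) : T ≤ C := by
  rcases eq_or_ne T 0 with rfl | hT₀
  · exact zero_le
  have hcancel : T ^ (1 / p) * T ^ (1 / q) ≤ C ^ (1 / p) * T ^ (1 / q) := by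
    rwa [← ENNReal.rpow_add _ _ hT₀ hT, hpq.one_div_add_one_div, div_one, ENNReal.rpow_one]
  rw [ENNReal.mul_le_mul_iff_left (ENNReal.rpow_pos (pos_iff_ne_zero.2 hT₀) hT).ne'
    (ENNReal.rpow_ne_top_of_nonneg hpq.symm.one_div_nonneg hT)] at hcancel
  exact (ENNReal.rpow_le_rpow_iff hpq.one_div_pos).1 hcancel

lemma lintegral_rpow_eq_iSup_lintegral_min_natCast_rpow {Ω : Type*} [MeasurableSpace Ω]
    {μ : Measure Ω} {f : Ω → ℝ≥0∞} (hf : Measurable f) {α : ℝ} (hα : 0 < α) :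
    ∫⁻ x, f x ^ α ∂μ = ⨆ n : ℕ, ∫⁻ x, min (f x) n ^ α ∂μ := by
  have hpt (x) : f x ^ α = ⨆ n : ℕ, min (f x) n ^ α := by
    conv_lhs => rw [← inf_top_eq (f x), ← ENNReal.iSup_natCast, inf_iSup_eq]
    exact (ENNReal.orderIsoRpow α hα).map_iSup _
  simp_rw [hpt]
  exact lintegral_iSup (fun n => (hf.min measurable_const).pow_const α) fun _ _ hmn _ => by
    gcongr

section compProd

variable {Ω₁ Ω₂ : Type*} [MeasurableSpace Ω₁] [MeasurableSpace Ω₂] {μ ν : Measure Ω₁}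
  {κ η : Kernel Ω₁ Ω₂} [SFinite μ] [IsFiniteMeasure ν] [IsSFiniteKernel κ]
  [IsFiniteKernel η] {α : ℝ}

lemma lintegral_rpow_le_of_le_rnDeriv_compProd (hα : 1 < α) (hμν : μ ≪ ν)
    (hκη : ∀ᵐ x ∂μ, κ x ≪ η x) {g : Ω₁ × Ω₂ → ℝ≥0∞} (hg : Measurable g)
    (hgh : g ≤ (μ ⊗ₘ κ).rnDeriv (ν ⊗ₘ η)) (hT : ∫⁻ z, g z ^ α ∂(ν ⊗ₘ η) ≠ ⊤) :
    ∫⁻ z, g z ^ α ∂(ν ⊗ₘ η) ≤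
      (∫⁻ x, μ.rnDeriv ν x ^ α ∂ν) * ⨆ x, ∫⁻ y, (κ x).rnDeriv (η x) y ^ α ∂(η x) := by
  set q := Real.conjExponent α
  have hpq : α.HolderConjugate q := .conjExponent hα
  set C₁ := ∫⁻ x, μ.rnDeriv ν x ^ α ∂ν
  set C₂ := ⨆ x, ∫⁻ y, (κ x).rnDeriv (η x) y ^ α ∂(η x)
  set A : Ω₁ → ℝ≥0∞ := fun x => ∫⁻ y, g (x, y) ^ α ∂η x
  have hA : Measurable A := (hg.pow_const α).lintegral_kernel_prod_right'
  have hTA : ∫⁻ z, g z ^ α ∂(ν ⊗ₘ η) = ∫⁻ x, A x ∂ν :=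
    Measure.lintegral_compProd (hg.pow_const α)
  have hgα (z) : g z ^ α = g z ^ (α - 1) * g z := by
    conv_lhs => rw [← sub_add_cancel α 1]
    rw [ENNReal.rpow_add_of_nonneg _ _ hpq.sub_one_pos.le zero_le_one, ENNReal.rpow_one]
  have hgq (z) : (g z ^ (α - 1)) ^ q = g z ^ α := by
    rw [← ENNReal.rpow_mul, hpq.sub_one_mul_conj]
  have hfiber (x) (hx : κ x ≪ η x) :
      ∫⁻ y, g (x, y) ^ (α - 1) ∂κ x ≤ C₂ ^ (1 / α) * A x ^ (1 / q) := by
    calc ∫⁻ y, g (x, y) ^ (α - 1) ∂κ x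
        ≤ (∫⁻ y, (κ x).rnDeriv (η x) y ^ α ∂(η x)) ^ (1 / α) *
            (∫⁻ y, (g (x, y) ^ (α - 1)) ^ q ∂η x) ^ (1 / q) :=
          lintegral_le_lintegral_rnDeriv_rpow_mul hx hpq
            ((hg.comp measurable_prodMk_left).pow_const _).aemeasurable
      _ ≤ C₂ ^ (1 / α) * A x ^ (1 / q) := by
          simp_rw [hgq]
          gcongr
          exact le_iSup (fun x => ∫⁻ y, (κ x).rnDeriv (η x) y ^ α ∂(η x)) x
  refine ENNReal.le_of_le_rpow_mul_self_rpow hpq hT ?_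
  calc ∫⁻ z, g z ^ α ∂(ν ⊗ₘ η)
      ≤ ∫⁻ z, (μ ⊗ₘ κ).rnDeriv (ν ⊗ₘ η) z * g z ^ (α - 1) ∂(ν ⊗ₘ η) := by
        gcongr with z
        rw [hgα, mul_comm]
        gcongr
        exact hgh z
    _ = ∫⁻ z, g z ^ (α - 1) ∂(μ ⊗ₘ κ) :=
        lintegral_rnDeriv_mul (hμν.compProd hκη) (hg.pow_const _).aemeasurable
    _ = ∫⁻ x, ∫⁻ y, g (x, y) ^ (α - 1) ∂κ x ∂μ := Measure.lintegral_compProd (hg.pow_const _)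
    _ ≤ ∫⁻ x, C₂ ^ (1 / α) * A x ^ (1 / q) ∂μ := lintegral_mono_ae (hκη.mono hfiber)
    _ = C₂ ^ (1 / α) * ∫⁻ x, A x ^ (1 / q) ∂μ := lintegral_const_mul _ (hA.pow_const _)
    _ ≤ C₂ ^ (1 / α) * (C₁ ^ (1 / α) * (∫⁻ x, (A x ^ (1 / q)) ^ q ∂ν) ^ (1 / q)) := by
        gcongr
        exact lintegral_le_lintegral_rnDeriv_rpow_mul hμν hpq (hA.pow_const _).aemeasurable
    _ = (C₁ * C₂) ^ (1 / α) * (∫⁻ z, g z ^ α ∂(ν ⊗ₘ η)) ^ (1 / q) := by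
        simp_rw [← ENNReal.rpow_mul, one_div_mul_cancel hpq.symm.ne_zero, ENNReal.rpow_one, hTA,
          ENNReal.mul_rpow_of_nonneg _ _ hpq.one_div_nonneg]
        ring

theorem lintegral_rnDeriv_compProd_rpow_le (hα : 1 < α) (hμν : μ ≪ ν)
    (hκη : ∀ᵐ x ∂μ, κ x ≪ η x) :
    ∫⁻ z, (μ ⊗ₘ κ).rnDeriv (ν ⊗ₘ η) z ^ α ∂(ν ⊗ₘ η) ≤
      (∫⁻ x, μ.rnDeriv ν x ^ α ∂ν) * ⨆ x, ∫⁻ y, (κ x).rnDeriv (η x) y ^ α ∂(η x) := by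
  have hα₀ : 0 < α := by linarith
  have hrn := (μ ⊗ₘ κ).measurable_rnDeriv (ν ⊗ₘ η)
  rw [lintegral_rpow_eq_iSup_lintegral_min_natCast_rpow hrn hα₀]
  refine iSup_le fun n => lintegral_rpow_le_of_le_rnDeriv_compProd hα hμν hκη
    (hrn.min measurable_const) (fun z => min_le_left _ _) (ne_top_of_le_ne_top ?_
      (lintegral_mono fun z => ENNReal.rpow_le_rpow (min_le_right _ _) hα₀.le))
  simp [lintegral_const, ENNReal.mul_ne_top, ENNReal.rpow_ne_top_of_nonneg hα₀.le]

end compProd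

/-- **Adaptive composition of Rényi differential privacy.** If `M₁` is `(α, ε₁)`-RDP and,
for every fixed first outcome `o₁`, the mechanism `D ↦ M₂ D o₁` is `(α, ε₂)`-RDP, then the
composed mechanism `D ↦ joint law of (o₁, o₂)` with `o₁ ∼ M₁ D`, `o₂ ∼ M₂ D o₁` is
`(α, ε₁ + ε₂)`-RDP. -/
theorem renyiDP_adaptive_composition {X Ω₁ Ω₂ : Type*} [MeasurableSpace X]
    [MeasurableSpace Ω₁] [MeasurableSpace Ω₂]
    (adj : List X → List X → Prop) (α ε₁ ε₂ : ℝ) (hα : 1 < α)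
    (M₁ : List X → Measure Ω₁) (M₂ : List X → ProbabilityTheory.Kernel Ω₁ Ω₂)
    (hprob₁ : ∀ D, IsProbabilityMeasure (M₁ D))
    (hprob₂ : ∀ D, ProbabilityTheory.IsMarkovKernel (M₂ D))
    (h₁ : ∀ D D', adj D D' → renyiDiv α (M₁ D) (M₁ D') ≤ (ε₁ : EReal))
    (h₂ : ∀ (o₁ : Ω₁) D D', adj D D' → renyiDiv α (M₂ D o₁) (M₂ D' o₁) ≤ (ε₂ : EReal)) :
    ∀ D D', adj D D' →
      renyiDiv α ((M₁ D).compProd (M₂ D)) ((M₁ D').compProd (M₂ D'))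
        ≤ ((ε₁ + ε₂ : ℝ) : EReal) := by
  intro D D' hadj
  have := hprob₁ D; have := hprob₁ D'; have := hprob₂ D; have := hprob₂ D'
  obtain ⟨hac, hmoment⟩ := (renyiDiv_le_iff hα ε₁).1 (h₁ D D' hadj)
  have hfiber (o₁ : Ω₁) := (renyiDiv_le_iff hα ε₂).1 (h₂ o₁ D D' hadj)
  have hac_fiber : ∀ᵐ o₁ ∂(M₁ D), M₂ D o₁ ≪ M₂ D' o₁ := .of_forall fun o₁ => (hfiber o₁).1
  refine (renyiDiv_le_iff hα _).2 ⟨hac.compProd hac_fiber, ?_⟩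
  calc _ ≤ _ := lintegral_rnDeriv_compProd_rpow_le hα hac hac_fiber
    _ ≤ ENNReal.ofReal (Real.exp ε₁) ^ (α - 1) * ENNReal.ofReal (Real.exp ε₂) ^ (α - 1) :=
        mul_le_mul' hmoment (iSup_le fun o₁ => (hfiber o₁).2)
    _ = ENNReal.ofReal (Real.exp (ε₁ + ε₂)) ^ (α - 1) := by
        rw [← ENNReal.mul_rpow_of_nonneg _ _ (by linarith),
          ← ENNReal.ofReal_mul (Real.exp_nonneg _), Real.exp_add]
end

section
/- Rényi privacy of the GNMax aggregator: Let K ∈ ℕ, σ > 0, and let n, n' ∈ ℝ^K be two vote histograms with ‖n − n'‖₂² ≤ 2. Let Z₁, …, Z_K be independent N(0, σ²) random variables, and let P (respectively P') be the law on {1, …, K} of argmax_j (n_j + Z_j) (respectively argmax_j (n'_j + Z_j)), with ties broken by taking the smallest maximizing index. Then for every α > 1, the Rényi divergence satisfies D_α(P ‖ P') ≤ α / σ². -/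
open MeasureTheory ProbabilityTheory
open scoped NNReal ENNReal Classical

/-- The argmax of `f : Fin K → ℝ`, with ties broken by taking the smallest maximizing index. -/
noncomputable def argmaxLeast {K : ℕ} [NeZero K] (f : Fin K → ℝ) : Fin K :=
  (Finset.univ.filter fun i => ∀ j, f j ≤ f i).min' (by
    obtain ⟨i, -, hi⟩ := Finset.exists_max_image Finset.univ f
      ⟨⟨0, Nat.pos_of_ne_zero (NeZero.ne K)⟩, Finset.mem_univ _⟩
    exact ⟨i, Finset.mem_filter.mpr ⟨Finset.mem_univ _, fun j => hi j (Finset.mem_univ j)⟩⟩)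

/-!
Shifting the noise, `P` and `P'` are the images under the argmax of the product Gaussians
`N(n, σ²I)` and `N(n', σ²I)`. The first has density
`G(z) = ∏ⱼ exp(((nⱼ - n'ⱼ) zⱼ - (nⱼ² - n'ⱼ²) / 2) / σ²)` with respect to the second, and the
Gaussian moment generating function gives `∫ G^α = exp(α (α - 1) ‖n - n'‖² / (2σ²))`.
Pushing forward to the finite set of indices can only decrease `∫ (dP/dP')^α dP'`: on each fibre
of the argmax, Hölder's inequality bounds `(∫ G)^α` by `∫ G^α` times the fibre's mass to the
power `α - 1`. Hence `D_α(P ‖ P') ≤ α ‖n - n'‖² / (2σ²) ≤ α / σ²`.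
-/

open Real

section Pi

variable {ι : Type*} [Fintype ι] {Ω : ι → Type*} [∀ i, MeasurableSpace (Ω i)]
  (μ : (i : ι) → Measure (Ω i)) [∀ i, IsProbabilityMeasure (μ i)]

theorem lintegral_pi_prod_eq_prod_lintegral (f : (i : ι) → Ω i → ℝ≥0∞)
    (hf : ∀ i, Measurable (f i)) :
    ∫⁻ x, ∏ i, f i (x i) ∂Measure.pi μ = ∏ i, ∫⁻ y, f i y ∂μ i := by
  rw [lintegral_prod_eq_prod_lintegral_of_indepFun _ _
    (iIndepFun_pi fun i => (hf i).aemeasurable) fun i => (hf i).comp (measurable_pi_apply i)]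
  exact Finset.prod_congr rfl fun i _ => (measurePreserving_eval μ i).lintegral_comp (hf i)

theorem pi_withDensity_eq_withDensity_prod (g : (i : ι) → Ω i → ℝ≥0∞)
    (hg : ∀ i, Measurable (g i)) [∀ i, SigmaFinite ((μ i).withDensity (g i))] :
    Measure.pi (fun i => (μ i).withDensity (g i))
      = (Measure.pi μ).withDensity fun x => ∏ i, g i (x i) := by
  refine Measure.pi_eq (μ := fun i => (μ i).withDensity (g i)) fun s hs => ?_
  have hbox : (Set.univ.pi s).indicator (fun x => ∏ i, g i (x i))
      = fun x => ∏ i, (s i).indicator (g i) (x i) := by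
    funext x
    simp only [Set.indicator, Set.mem_univ_pi, Finset.prod_ite_zero, Finset.mem_univ, true_implies]
  rw [withDensity_apply _ (MeasurableSet.univ_pi hs),
    ← lintegral_indicator (MeasurableSet.univ_pi hs), hbox,
    lintegral_pi_prod_eq_prod_lintegral μ _ fun i => (hg i).indicator (hs i)]
  exact Finset.prod_congr rfl fun i _ => by
    rw [lintegral_indicator (hs i), withDensity_apply _ (hs i)]

end Pi

theorem argmaxLeast_eq_iff {K : ℕ} [NeZero K] (f : Fin K → ℝ) (i : Fin K) :
    argmaxLeast f = i ↔ (∀ j, f j ≤ f i) ∧ ∀ k < i, ¬ ∀ j, f j ≤ f k := by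
  rw [argmaxLeast, Finset.min'_eq_iff]
  simp only [Finset.mem_filter, Finset.mem_univ, true_and]
  refine and_congr_right fun _ => forall_congr' fun k => ?_
  constructor
  · exact fun h hk hmax => (h hmax).not_gt hk
  · exact fun h hmax => not_lt.mp fun hk => h hk hmax

theorem measurable_argmaxLeast {K : ℕ} [NeZero K] : Measurable (argmaxLeast (K := K)) := by
  refine measurable_to_countable' fun i => ?_
  simp_rw [Set.preimage, Set.mem_singleton_iff, argmaxLeast_eq_iff]
  refine measurableSet_setOfPred.mpr ?_
  have hle : ∀ a b : Fin K, Measurable fun g : Fin K → ℝ => g a ≤ g b := fun a b =>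
    measurableSet_setOfPred.mp (measurableSet_le (measurable_pi_apply a) (measurable_pi_apply b))
  fun_prop

noncomputable def gaussianDensityRatio (m m' : ℝ) (v : ℝ≥0) (x : ℝ) : ℝ≥0∞ :=
  ENNReal.ofReal (rexp ((m - m') / v * x - (m - m') * (m + m') / (2 * v)))

@[fun_prop]
theorem measurable_gaussianDensityRatio (m m' : ℝ) (v : ℝ≥0) :
    Measurable (gaussianDensityRatio m m' v) := by
  unfold gaussianDensityRatio
  fun_prop

theorem gaussianReal_eq_withDensity_gaussianDensityRatio (m m' : ℝ) {v : ℝ≥0} (hv : v ≠ 0) :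
    gaussianReal m v = (gaussianReal m' v).withDensity (gaussianDensityRatio m m' v) := by
  rw [gaussianReal_of_var_ne_zero _ hv, gaussianReal_of_var_ne_zero _ hv,
    ← withDensity_mul _ (measurable_gaussianPDF _ _) (measurable_gaussianDensityRatio _ _ _)]
  congr 1
  funext x
  rw [Pi.mul_apply, gaussianPDF, gaussianPDF, gaussianDensityRatio,
    ← ENNReal.ofReal_mul (gaussianPDFReal_nonneg _ _ _), gaussianPDFReal, gaussianPDFReal,
    mul_assoc (√(2 * π * (v : ℝ)))⁻¹, ← Real.exp_add]
  congr 3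
  have hv' : (v : ℝ) ≠ 0 := mod_cast hv
  field_simp
  ring

theorem lintegral_ofReal_exp_affine_gaussianReal (m : ℝ) (v : ℝ≥0) (t c : ℝ) :
    ∫⁻ x, ENNReal.ofReal (rexp (t * x + c)) ∂gaussianReal m v
      = ENNReal.ofReal (rexp (m * t + v * t ^ 2 / 2 + c)) := by
  have hmgf : ∫ x, rexp (t * x) ∂gaussianReal m v = rexp (m * t + v * t ^ 2 / 2) := by
    simpa [mgf] using congrFun (mgf_id_gaussianReal (μ := m) (v := v)) t
  simp_rw [Real.exp_add (_ + _) c, Real.exp_add (t * _) c, ENNReal.ofReal_mul (Real.exp_pos _).le]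
  rw [lintegral_mul_const' _ _ ENNReal.ofReal_ne_top, ← hmgf,
    ofReal_integral_eq_lintegral_ofReal (integrable_exp_mul_gaussianReal t)
      (Filter.Eventually.of_forall fun _ => (Real.exp_pos _).le)]

theorem lintegral_gaussianDensityRatio_rpow (m m' : ℝ) {v : ℝ≥0} (hv : v ≠ 0) (α : ℝ) :
    ∫⁻ x, gaussianDensityRatio m m' v x ^ α ∂gaussianReal m' v
      = ENNReal.ofReal (rexp (α * (α - 1) * (m - m') ^ 2 / (2 * v))) := by
  simp_rw [gaussianDensityRatio, ENNReal.ofReal_rpow_of_pos (Real.exp_pos _), ← Real.exp_mul,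
    sub_mul, mul_comm _ α, ← mul_assoc, sub_eq_add_neg]
  rw [lintegral_ofReal_exp_affine_gaussianReal]
  have hv' : (v : ℝ) ≠ 0 := mod_cast hv
  congr 2
  field_simp
  ring

section GaussianPi

variable {ι : Type*} [Fintype ι] {v : ℝ≥0}

theorem map_add_pi_gaussianReal_zero (m : ι → ℝ) :
    (Measure.pi fun _ : ι => gaussianReal 0 v).map (fun z j => m j + z j)
      = Measure.pi fun j => gaussianReal (m j) v := by
  refine (measurePreserving_pi _ _ fun j => ⟨measurable_const_add (m j), ?_⟩).map_eq
  simpa [add_comm] using gaussianReal_map_const_add (μ := 0) (v := v) (m j)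

theorem pi_gaussianReal_eq_withDensity (m m' : ι → ℝ) (hv : v ≠ 0) :
    Measure.pi (fun i => gaussianReal (m i) v)
      = (Measure.pi fun i => gaussianReal (m' i) v).withDensity
          fun x => ∏ i, gaussianDensityRatio (m i) (m' i) v (x i) := by
  have : ∀ i, SigmaFinite ((gaussianReal (m' i) v).withDensity
      (gaussianDensityRatio (m i) (m' i) v)) := fun i => by
    rw [← gaussianReal_eq_withDensity_gaussianDensityRatio _ _ hv]
    infer_instance
  rw [show (fun i => gaussianReal (m i) v) = fun i => (gaussianReal (m' i) v).withDensity
    (gaussianDensityRatio (m i) (m' i) v) from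
      funext fun i => gaussianReal_eq_withDensity_gaussianDensityRatio _ _ hv]
  exact pi_withDensity_eq_withDensity_prod _ _ fun i => measurable_gaussianDensityRatio _ _ _

theorem lintegral_prod_gaussianDensityRatio_rpow (m m' : ι → ℝ) (hv : v ≠ 0) {α : ℝ}
    (hα : 0 ≤ α) :
    ∫⁻ x, (∏ i, gaussianDensityRatio (m i) (m' i) v (x i)) ^ α
        ∂Measure.pi (fun i => gaussianReal (m' i) v)
      = ENNReal.ofReal (rexp ((α * (α - 1) * ∑ i, (m i - m' i) ^ 2) / (2 * v))) := by
  simp_rw [← ENNReal.prod_rpow_of_nonneg hα]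
  rw [lintegral_pi_prod_eq_prod_lintegral _ (fun i y => gaussianDensityRatio (m i) (m' i) v y ^ α)
    fun i => by fun_prop]
  simp_rw [lintegral_gaussianDensityRatio_rpow _ _ hv]
  rw [← ENNReal.ofReal_prod_of_nonneg fun _ _ => (Real.exp_pos _).le, ← Real.exp_sum,
    Finset.mul_sum, Finset.sum_div]

end GaussianPi

theorem lintegral_rpow_le_lintegral_rpow_mul_measure_univ {Ω : Type*} [MeasurableSpace Ω]
    (μ : Measure Ω) {f : Ω → ℝ≥0∞} (hf : AEMeasurable f μ) {α : ℝ} (hα : 1 < α) :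
    (∫⁻ x, f x ∂μ) ^ α ≤ (∫⁻ x, f x ^ α ∂μ) * μ Set.univ ^ (α - 1) := by
  have hα0 : 0 < α := by linarith
  have holder := ENNReal.lintegral_mul_le_Lp_mul_Lq μ (Real.HolderConjugate.conjExponent hα) hf
    (aemeasurable_const (b := (1 : ℝ≥0∞)))
  simp only [Pi.mul_apply, mul_one, ENNReal.one_rpow, lintegral_const, one_mul] at holder
  calc (∫⁻ x, f x ∂μ) ^ α
      ≤ ((∫⁻ x, f x ^ α ∂μ) ^ (1 / α) * μ Set.univ ^ (1 / α.conjExponent)) ^ α := by gcongr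
    _ = (∫⁻ x, f x ^ α ∂μ) * μ Set.univ ^ (α - 1) := by
      rw [ENNReal.mul_rpow_of_nonneg _ _ hα0.le, ← ENNReal.rpow_mul, ← ENNReal.rpow_mul,
        one_div_mul_cancel hα0.ne', ENNReal.rpow_one, Real.conjExponent, one_div_div,
        div_mul_cancel₀ _ hα0.ne']

section Discrete

variable {ι : Type*} [MeasurableSpace ι] [MeasurableSingletonClass ι]

theorem rnDeriv_rpow_mul_measure_singleton_le {P Q : Measure ι} [IsFiniteMeasure P]
    [IsFiniteMeasure Q] (hPQ : P ≪ Q) (i : ι) {α : ℝ} (hα : 0 ≤ α) {A : ℝ≥0∞}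
    (h : P {i} ^ α ≤ A * Q {i} ^ (α - 1)) :
    P.rnDeriv Q i ^ α * Q {i} ≤ A := by
  by_cases hQ0 : Q {i} = 0
  · simp [hQ0]
  have hQtop : Q {i} ≠ ⊤ := measure_ne_top Q {i}
  have hrnDeriv : P.rnDeriv Q i = P {i} / Q {i} := by
    rw [ENNReal.eq_div_iff hQ0 hQtop, mul_comm, ← lintegral_singleton,
      Measure.setLIntegral_rnDeriv hPQ]
  calc P.rnDeriv Q i ^ α * Q {i} = P {i} ^ α / Q {i} ^ α * Q {i} := by
        rw [hrnDeriv, ENNReal.div_rpow_of_nonneg _ _ hα]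
    _ ≤ A * Q {i} ^ (α - 1) / Q {i} ^ α * Q {i} := by gcongr
    _ = A := by
      rw [mul_div_assoc, ← ENNReal.rpow_sub _ _ hQ0 hQtop, sub_sub_cancel_left,
        ENNReal.rpow_neg_one, mul_assoc, ENNReal.inv_mul_cancel hQ0 hQtop, mul_one]

theorem lintegral_rnDeriv_map_rpow_le [Fintype ι] {Ω : Type*} [MeasurableSpace Ω]
    (μ ν : Measure Ω) [IsFiniteMeasure μ] [IsFiniteMeasure ν] {G : Ω → ℝ≥0∞}
    (hG : Measurable G) (hμ : μ = ν.withDensity G) {f : Ω → ι} (hf : Measurable f) {α : ℝ}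
    (hα : 1 < α) :
    ∫⁻ i, (μ.map f).rnDeriv (ν.map f) i ^ α ∂(ν.map f) ≤ ∫⁻ ω, G ω ^ α ∂ν := by
  have hfibre : ∀ i, MeasurableSet (f ⁻¹' {i}) := fun i => hf (measurableSet_singleton i)
  have hPQ : μ.map f ≪ ν.map f := (hμ ▸ withDensity_absolutelyContinuous ν G).map hf
  have hatom : ∀ i, (μ.map f).rnDeriv (ν.map f) i ^ α * ν.map f {i}
      ≤ ∫⁻ ω in f ⁻¹' {i}, G ω ^ α ∂ν := fun i => by
    refine rnDeriv_rpow_mul_measure_singleton_le hPQ i (by linarith) ?_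
    rw [Measure.map_apply hf (measurableSet_singleton i),
      Measure.map_apply hf (measurableSet_singleton i), hμ, withDensity_apply _ (hfibre i)]
    simpa using lintegral_rpow_le_lintegral_rpow_mul_measure_univ (ν.restrict (f ⁻¹' {i}))
      hG.aemeasurable hα
  calc ∫⁻ i, (μ.map f).rnDeriv (ν.map f) i ^ α ∂(ν.map f)
      = ∑ i, (μ.map f).rnDeriv (ν.map f) i ^ α * ν.map f {i} := lintegral_fintype _
    _ ≤ ∑ i, ∫⁻ ω in f ⁻¹' {i}, G ω ^ α ∂ν := Finset.sum_le_sum fun i _ => hatom i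
    _ = ∫⁻ ω, G ω ^ α ∂ν := by
      rw [← lintegral_biUnion_finset (fun i _ j _ hij => (Set.disjoint_singleton.2 hij).preimage f)
        fun i _ => hfibre i, Finset.set_biUnion_preimage_singleton, Finset.coe_univ,
        Set.preimage_univ, setLIntegral_univ]

end Discrete

theorem renyiDiv_le_of_lintegral_rnDeriv_rpow_le {Ω : Type*} [MeasurableSpace Ω]
    {P Q : Measure Ω} {α c : ℝ} (hα : 1 < α) (hPQ : P ≪ Q)
    (h : ∫⁻ x, P.rnDeriv Q x ^ α ∂Q ≤ ENNReal.ofReal (rexp c)) :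
    renyiDiv α P Q ≤ ((c / (α - 1) : ℝ) : EReal) := by
  have hlog : ENNReal.log (∫⁻ x, P.rnDeriv Q x ^ α ∂Q) ≤ (c : EReal) := by
    simpa [ENNReal.log_ofReal_of_pos (Real.exp_pos c)] using ENNReal.log_monotone h
  rw [renyiDiv, if_pos hPQ, div_eq_inv_mul, EReal.coe_mul]
  exact mul_le_mul_of_nonneg_left hlog (mod_cast (inv_pos.2 (sub_pos.2 hα)).le)

/-- **Rényi privacy of the GNMax aggregator.** For vote histograms `n, n'` with
`‖n − n'‖₂² ≤ 2`, the laws `P, P'` of the noisy argmax (with iid `N(0, σ²)` noise added to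
each count, ties broken towards the smallest index) satisfy `D_α(P ‖ P') ≤ α / σ²` for every
`α > 1`. -/
theorem gnmax_renyi_privacy {K : ℕ} [NeZero K] (σ : ℝ) (hσ : 0 < σ)
    (n n' : Fin K → ℝ) (hsens : ∑ j : Fin K, (n j - n' j) ^ 2 ≤ 2)
    (α : ℝ) (hα : 1 < α) :
    renyiDiv α
      ((Measure.pi fun _ : Fin K => gaussianReal 0 (σ ^ 2).toNNReal).map
        fun z => argmaxLeast fun j => n j + z j)
      ((Measure.pi fun _ : Fin K => gaussianReal 0 (σ ^ 2).toNNReal).map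
        fun z => argmaxLeast fun j => n' j + z j)
      ≤ ((α / σ ^ 2 : ℝ) : EReal) := by
  set v := (σ ^ 2).toNNReal
  have hv : v ≠ 0 := by simpa [v] using hσ.ne'
  have hvσ : (v : ℝ) = σ ^ 2 := Real.coe_toNNReal _ (sq_nonneg σ)
  have hlaw : ∀ m : Fin K → ℝ,
      (Measure.pi fun _ : Fin K => gaussianReal 0 v).map (fun z => argmaxLeast fun j => m j + z j)
        = (Measure.pi fun j => gaussianReal (m j) v).map argmaxLeast := fun m => by
    rw [← map_add_pi_gaussianReal_zero m, Measure.map_map measurable_argmaxLeast (by fun_prop)]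
    rfl
  have hdensity := pi_gaussianReal_eq_withDensity n n' hv
  rw [hlaw, hlaw]
  refine (renyiDiv_le_of_lintegral_rnDeriv_rpow_le hα
    ((hdensity ▸ withDensity_absolutelyContinuous _ _).map measurable_argmaxLeast)
    ((lintegral_rnDeriv_map_rpow_le _ _ (by fun_prop) hdensity measurable_argmaxLeast hα).trans_eq
      (lintegral_prod_gaussianDensityRatio_rpow n n' hv (by linarith)))).trans ?_
  rw [EReal.coe_le_coe_iff, hvσ, div_le_div_iff₀ (by linarith) (by positivity)]
  have hα0 : 0 < α := by linarith
  field_simp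
  nlinarith [mul_le_mul_of_nonneg_left hsens (mul_nonneg hα0.le (sub_pos.2 hα).le), sq_nonneg σ]
end

section
/- Rényi privacy of the noisy confidence check in Confident-GNMax: Let K ∈ ℕ, σ₁ > 0, a threshold T ∈ ℝ, and let n, n' ∈ ℝ^K satisfy |n_j − n'_j| ≤ 1 for every j. Then |max_j n_j − max_j n'_j| ≤ 1, and, with Z ∼ N(0, σ₁²), the Bernoulli distributions P and P' of the indicator events {max_j n_j + Z ≥ T} and {max_j n'_j + Z ≥ T} satisfy, for every α > 1, D_α(P ‖ P') ≤ α / (2σ₁²). -/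
open MeasureTheory ProbabilityTheory
open scoped NNReal ENNReal Classical

/-! Thresholding at `T` is post-processing of `max_j n_j + Z ∼ N(max_j n_j, σ₁²)`, so by the
data-processing inequality (Jensen's inequality on each fibre of a map to a countable space)
the Rényi divergence of the Bernoulli laws is at most that of the Gaussians,
`α (m - m')² / (2σ₁²)`, and `|m - m'| ≤ 1` for the maxima `m, m'`. -/

open Set

theorem abs_sup'_sub_sup'_le {ι α : Type*} [AddCommGroup α] [LinearOrder α]
    [IsOrderedAddMonoid α] {s : Finset ι} (hs : s.Nonempty) {f g : ι → α} {c : α}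
    (h : ∀ i ∈ s, |f i - g i| ≤ c) : |s.sup' hs f - s.sup' hs g| ≤ c := by
  have sup'_le_sup'_add {f g : ι → α} (hfg : ∀ i ∈ s, f i ≤ g i + c) :
      s.sup' hs f ≤ s.sup' hs g + c :=
    Finset.sup'_le _ _ fun i hi => (hfg i hi).trans (add_le_add_left (s.le_sup' g hi) c)
  refine abs_sub_le_iff.2 ⟨sub_le_iff_le_add'.2 (sup'_le_sup'_add fun i hi => ?_),
    sub_le_iff_le_add'.2 (sup'_le_sup'_add fun i hi => ?_)⟩
  · exact sub_le_iff_le_add'.1 (abs_sub_le_iff.1 (h i hi)).1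
  · exact sub_le_iff_le_add'.1 (abs_sub_le_iff.1 (h i hi)).2

section Jensen

variable {Ω : Type*} [MeasurableSpace Ω] {μ : Measure Ω} {r : Ω → ℝ≥0∞} {α : ℝ}

theorem rpow_lintegral_le_lintegral_rpow [IsProbabilityMeasure μ] (hr : AEMeasurable r μ)
    (hα : 1 ≤ α) : (∫⁻ x, r x ∂μ) ^ α ≤ ∫⁻ x, r x ^ α ∂μ := by
  have h := eLpNorm'_le_eLpNorm'_of_exponent_le one_pos hα μ hr.aestronglyMeasurable
  simp only [eLpNorm'_eq_lintegral_enorm, enorm_eq_self, ENNReal.rpow_one, div_one] at h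
  calc (∫⁻ x, r x ∂μ) ^ α ≤ ((∫⁻ x, r x ^ α ∂μ) ^ (1 / α)) ^ α := by gcongr
    _ = ∫⁻ x, r x ^ α ∂μ := by
      rw [← ENNReal.rpow_mul, one_div_mul_cancel (by positivity), ENNReal.rpow_one]

theorem lintegral_div_measure_univ_rpow_mul_le [IsFiniteMeasure μ] (hr : AEMeasurable r μ)
    (hα : 1 ≤ α) : ((∫⁻ x, r x ∂μ) / μ univ) ^ α * μ univ ≤ ∫⁻ x, r x ^ α ∂μ := by
  rcases eq_zero_or_neZero μ with rfl | _
  · simp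
  set c := μ univ
  have hc : c ≠ 0 := NeZero.ne c
  have h := rpow_lintegral_le_lintegral_rpow (μ := c⁻¹ • μ) (hr.smul_measure _) hα
  simp only [lintegral_smul_measure, smul_eq_mul] at h
  calc ((∫⁻ x, r x ∂μ) / c) ^ α * c = (c⁻¹ * ∫⁻ x, r x ∂μ) ^ α * c := by
        rw [ENNReal.div_eq_inv_mul]
    _ ≤ (c⁻¹ * ∫⁻ x, r x ^ α ∂μ) * c := by gcongr
    _ = ∫⁻ x, r x ^ α ∂μ := by
      rw [mul_comm, ← mul_assoc, ENNReal.mul_inv_cancel hc (measure_ne_top μ univ), one_mul]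

end Jensen

-- Multiplied by `ν {b}` so that it also holds on null atoms, where `∂μ/∂ν` is arbitrary.
theorem rnDeriv_rpow_mul_measure_singleton {β : Type*} [MeasurableSpace β] {μ ν : Measure β}
    [μ.HaveLebesgueDecomposition ν] [SFinite ν] (hμν : μ ≪ ν) (b : β) (hb : ν {b} ≠ ∞) (α : ℝ) :
    μ.rnDeriv ν b ^ α * ν {b} = (μ {b} / ν {b}) ^ α * ν {b} := by
  rcases eq_or_ne (ν {b}) 0 with h0 | h0
  · simp [h0]
  have h : μ.rnDeriv ν b * ν {b} = μ {b} := by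
    rw [← lintegral_singleton' (Measure.measurable_rnDeriv μ ν), Measure.setLIntegral_rnDeriv hμν]
  rw [(ENNReal.eq_div_iff h0 hb).2 (by rw [mul_comm, h] : ν {b} * μ.rnDeriv ν b = μ {b})]

section DataProcessing

variable {Ω β : Type*} [MeasurableSpace Ω] [MeasurableSpace β] {μ ν : Measure Ω} {α : ℝ}

theorem measure_div_rpow_mul_le_setLIntegral_rnDeriv_rpow [IsFiniteMeasure μ]
    [IsFiniteMeasure ν] (hμν : μ ≪ ν) (s : Set Ω) (hα : 1 ≤ α) :
    (μ s / ν s) ^ α * ν s ≤ ∫⁻ x in s, μ.rnDeriv ν x ^ α ∂ν := by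
  have h := lintegral_div_measure_univ_rpow_mul_le (μ := ν.restrict s)
    (Measure.measurable_rnDeriv μ ν).aemeasurable hα
  rwa [Measure.setLIntegral_rnDeriv hμν, Measure.restrict_apply_univ] at h

theorem lintegral_rnDeriv_map_rpow_le_s9 [Countable β] [MeasurableSingletonClass β]
    [IsFiniteMeasure μ] [IsFiniteMeasure ν] (hμν : μ ≪ ν) {f : Ω → β} (hf : Measurable f)
    (hα : 1 ≤ α) :
    ∫⁻ b, (μ.map f).rnDeriv (ν.map f) b ^ α ∂(ν.map f) ≤ ∫⁻ x, μ.rnDeriv ν x ^ α ∂ν := by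
  have hfiber (b : β) : MeasurableSet (f ⁻¹' {b}) := hf (measurableSet_singleton b)
  calc ∫⁻ b, (μ.map f).rnDeriv (ν.map f) b ^ α ∂(ν.map f)
      = ∑' b, (μ (f ⁻¹' {b}) / ν (f ⁻¹' {b})) ^ α * ν (f ⁻¹' {b}) := by
        rw [lintegral_countable']
        congr with b
        rw [rnDeriv_rpow_mul_measure_singleton (hμν.map hf) b (measure_ne_top _ _) α,
          Measure.map_apply hf (measurableSet_singleton b),
          Measure.map_apply hf (measurableSet_singleton b)]
    _ ≤ ∑' b, ∫⁻ x in f ⁻¹' {b}, μ.rnDeriv ν x ^ α ∂ν :=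
        ENNReal.tsum_le_tsum fun b => measure_div_rpow_mul_le_setLIntegral_rnDeriv_rpow hμν _ hα
    _ = ∫⁻ x, μ.rnDeriv ν x ^ α ∂ν := by
        rw [← lintegral_iUnion hfiber (pairwise_disjoint_fiber f), ← preimage_iUnion,
          iUnion_of_singleton, preimage_univ, Measure.restrict_univ]

theorem renyiDiv_map_le [Countable β] [MeasurableSingletonClass β] [IsFiniteMeasure μ]
    [IsFiniteMeasure ν] {f : Ω → β} (hf : Measurable f) (hα : 1 ≤ α) :
    renyiDiv α (μ.map f) (ν.map f) ≤ renyiDiv α μ ν := by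
  by_cases hμν : μ ≪ ν
  · rw [renyiDiv, renyiDiv, if_pos hμν, if_pos (hμν.map hf)]
    exact mul_le_mul_of_nonneg_left
      (ENNReal.log_monotone (lintegral_rnDeriv_map_rpow_le_s9 hμν hf hα))
      (EReal.coe_nonneg.2 (inv_nonneg.2 (sub_nonneg.2 hα)))
  · exact le_top.trans_eq (if_neg hμν).symm

end DataProcessing

section Gaussian

variable {v : ℝ≥0}

theorem gaussianPDFReal_div (hv : v ≠ 0) (m m' x : ℝ) :
    gaussianPDFReal m v x / gaussianPDFReal m' v x
      = Real.exp (((x - m') ^ 2 - (x - m) ^ 2) / (2 * v)) := by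
  simp only [gaussianPDFReal]
  rw [mul_div_mul_left _ _ (by positivity), ← Real.exp_sub]
  congr 1
  field_simp
  ring

theorem gaussianPDF_div_rpow_mul (hv : v ≠ 0) (m m' α x : ℝ) :
    (gaussianPDF m v x / gaussianPDF m' v x) ^ α * gaussianPDF m' v x
      = ENNReal.ofReal (Real.exp (α * (α - 1) * (m - m') ^ 2 / (2 * v)))
        * gaussianPDF (m' + α * (m - m')) v x := by
  have hpos (c : ℝ) : 0 < gaussianPDFReal c v x := gaussianPDFReal_pos c v x hv
  rw [gaussianPDF, gaussianPDF, gaussianPDF, ← ENNReal.ofReal_div_of_pos (hpos m'),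
    ENNReal.ofReal_rpow_of_pos (div_pos (hpos m) (hpos m')),
    ← ENNReal.ofReal_mul (Real.rpow_nonneg (div_pos (hpos m) (hpos m')).le α),
    ← ENNReal.ofReal_mul (Real.exp_nonneg _), gaussianPDFReal_div hv, ← Real.exp_mul]
  congr 1
  simp only [gaussianPDFReal]
  rw [mul_left_comm, ← Real.exp_add, mul_left_comm, ← Real.exp_add]
  congr 2
  field_simp
  ring

theorem lintegral_gaussianPDF_div_rpow (hv : v ≠ 0) (m m' α : ℝ) :
    ∫⁻ x, (gaussianPDF m v x / gaussianPDF m' v x) ^ α ∂(gaussianReal m' v)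
      = ENNReal.ofReal (Real.exp (α * (α - 1) * (m - m') ^ 2 / (2 * v))) := by
  rw [gaussianReal_of_var_ne_zero _ hv, lintegral_withDensity_eq_lintegral_mul _
    (measurable_gaussianPDF m' v) (by fun_prop)]
  simp_rw [Pi.mul_apply, mul_comm (gaussianPDF m' v _), gaussianPDF_div_rpow_mul hv]
  rw [lintegral_const_mul _ (measurable_gaussianPDF _ _), lintegral_gaussianPDF_eq_one _ hv,
    mul_one]

theorem rnDeriv_gaussianReal_gaussianReal (hv : v ≠ 0) (m m' : ℝ) :
    (gaussianReal m v).rnDeriv (gaussianReal m' v)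
      =ᵐ[gaussianReal m' v] fun x => gaussianPDF m v x / gaussianPDF m' v x := by
  have hac := gaussianReal_absolutelyContinuous m' hv
  filter_upwards [Measure.rnDeriv_eq_div (gaussianReal_absolutelyContinuous m hv) hac,
    hac (rnDeriv_gaussianReal m v), hac (rnDeriv_gaussianReal m' v)] with x h hm hm'
  rw [h, hm, hm']

theorem renyiDiv_gaussianReal (hv : v ≠ 0) (m m' : ℝ) {α : ℝ} (hα : α ≠ 1) :
    renyiDiv α (gaussianReal m v) (gaussianReal m' v)
      = ((α * (m - m') ^ 2 / (2 * v) : ℝ) : EReal) := by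
  have hac : gaussianReal m v ≪ gaussianReal m' v :=
    (gaussianReal_absolutelyContinuous m hv).trans (gaussianReal_absolutelyContinuous' m' hv)
  rw [renyiDiv, if_pos hac, lintegral_congr_ae ((rnDeriv_gaussianReal_gaussianReal hv m m').mono
    fun x hx => by rw [hx]), lintegral_gaussianPDF_div_rpow hv,
    ENNReal.log_ofReal_of_pos (Real.exp_pos _), Real.log_exp, ← EReal.coe_mul]
  congr 1
  have : α - 1 ≠ 0 := sub_ne_zero.2 hα
  field_simp

end Gaussian

theorem measurable_decide_le (T : ℝ) : Measurable fun z : ℝ => decide (T ≤ z) :=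
  measurable_to_bool <| by
    simp only [preimage, mem_singleton_iff, decide_eq_true_eq]
    exact measurableSet_Ici

/-- **Rényi privacy of the noisy confidence check in Confident-GNMax.** If the histograms
`n, n'` satisfy `|n j − n' j| ≤ 1` for every class `j`, then their maxima differ by at
most `1`, and with `Z ∼ N(0, σ₁²)` the Bernoulli laws `P, P'` of the indicator events
`{max_j n_j + Z ≥ T}` and `{max_j n'_j + Z ≥ T}` satisfy `D_α(P ‖ P') ≤ α / (2σ₁²)`
for every `α > 1`. -/
theorem confident_gnmax_threshold_renyi_privacy {K : ℕ} [NeZero K]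
    (σ₁ : ℝ) (hσ₁ : 0 < σ₁) (T : ℝ) (n n' : Fin K → ℝ)
    (hsens : ∀ j, |n j - n' j| ≤ 1) :
    |(Finset.univ.sup' Finset.univ_nonempty n) - (Finset.univ.sup' Finset.univ_nonempty n')|
        ≤ 1 ∧
    ∀ α : ℝ, 1 < α →
      renyiDiv α
        ((gaussianReal 0 (σ₁ ^ 2).toNNReal).map
          fun z => decide (T ≤ Finset.univ.sup' Finset.univ_nonempty n + z))
        ((gaussianReal 0 (σ₁ ^ 2).toNNReal).map
          fun z => decide (T ≤ Finset.univ.sup' Finset.univ_nonempty n' + z))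
        ≤ ((α / (2 * σ₁ ^ 2) : ℝ) : EReal) := by
  have hmax := abs_sup'_sub_sup'_le Finset.univ_nonempty fun j _ => hsens j
  refine ⟨hmax, fun α hα => ?_⟩
  set m := Finset.univ.sup' Finset.univ_nonempty n
  set m' := Finset.univ.sup' Finset.univ_nonempty n'
  set v := (σ₁ ^ 2).toNNReal
  have hv : v ≠ 0 := (Real.toNNReal_pos.2 (by positivity)).ne'
  have hshift (c : ℝ) : (gaussianReal 0 v).map (fun z => decide (T ≤ c + z))
      = (gaussianReal c v).map fun z => decide (T ≤ z) := by
    rw [← zero_add c, ← gaussianReal_map_const_add, Measure.map_map (measurable_decide_le T)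
      (measurable_const_add _), zero_add, Function.comp_def]
  calc renyiDiv α ((gaussianReal 0 v).map fun z => decide (T ≤ m + z))
        ((gaussianReal 0 v).map fun z => decide (T ≤ m' + z))
      = renyiDiv α ((gaussianReal m v).map fun z => decide (T ≤ z))
        ((gaussianReal m' v).map fun z => decide (T ≤ z)) := by rw [hshift, hshift]
    _ ≤ renyiDiv α (gaussianReal m v) (gaussianReal m' v) :=
      renyiDiv_map_le (measurable_decide_le T) hα.le
    _ = ((α * (m - m') ^ 2 / (2 * σ₁ ^ 2) : ℝ) : EReal) := by
      rw [renyiDiv_gaussianReal hv m m' hα.ne', Real.coe_toNNReal _ (sq_nonneg σ₁)]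
    _ ≤ ((α / (2 * σ₁ ^ 2) : ℝ) : EReal) := by
      have : (m - m') ^ 2 ≤ 1 := (sq_le_one_iff_abs_le_one _).2 hmax
      exact EReal.coe_le_coe_iff.2 (by gcongr; nlinarith)
end
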